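/- arXiv:math/0411442 — 2 statements merged into one kernel-verified Lean document; each statement's English description precedes it below -/
import Mathlib

section
/- Let A and B be unital C*-algebras, φ : A → B a positive unital map, and f : U → ℝ a convex function on an open convex set U ⊆ ℝ^n. Let a_1, …, a_n ∈ A be mutually commuting self-adjoint elements with ∏_i σ(a_i) ⊆ U, and suppose φ(a_1), …, φ(a_n), φ(f(a_1,…,a_n)) mutually commute. Then f(φ(a_1), …, φ(a_n)) ≤ φ(f(a_1,…,a_n)). -/
open scoped ComplexOrder

lemma exists_affine_minorant {n : ℕ} {U : Set (Fin n → ℝ)} (hU_open : IsOpen U)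
    (hU_conv : Convex ℝ U) {f : (Fin n → ℝ) → ℝ} (hf : ConvexOn ℝ U f)
    (hf_cont : ContinuousOn f U) {x : Fin n → ℝ} (hx : x ∈ U) :
    ∃ (c : ℝ) (b : Fin n → ℝ),
      (∀ y ∈ U, c + ∑ i, b i * y i ≤ f y) ∧ c + ∑ i, b i * x i = f x := by
  set s : Set ((Fin n → ℝ) × ℝ) := {p | p.1 ∈ U ∧ f p.1 < p.2} with hs_def
  have hconv : Convex ℝ s := by
    rintro ⟨y, t⟩ ⟨hyU, hyt⟩ ⟨z, u⟩ ⟨hzU, hzu⟩ lam mu hlam hmu hsum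
    refine ⟨hU_conv hyU hzU hlam hmu hsum, ?_⟩
    have h1 : f (lam • y + mu • z) ≤ lam * f y + mu * f z := hf.2 hyU hzU hlam hmu hsum
    have h2 : lam * f y + mu * f z < lam * t + mu * u := by
      rcases hlam.eq_or_lt with h | h
      · have hmu1 : mu = 1 := by linarith
        simp only [← h, hmu1]; simpa using hzu
      · have := mul_le_mul_of_nonneg_left hzu.le hmu
        have := mul_lt_mul_of_pos_left hyt h
        linarith
    exact lt_of_le_of_lt h1 h2
  have hopen : IsOpen s := by
    have hs_eq : s = (U ×ˢ (Set.univ : Set ℝ)) ∩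
        ((fun p : (Fin n → ℝ) × ℝ => p.2 - f p.1) ⁻¹' Set.Ioi 0) := by
      ext p
      simp only [hs_def, Set.mem_setOf_eq, Set.mem_inter_iff, Set.mem_prod, Set.mem_univ,
        and_true, Set.mem_preimage, Set.mem_Ioi, sub_pos]
    rw [hs_eq]
    refine ContinuousOn.isOpen_inter_preimage ?_ (hU_open.prod isOpen_univ) isOpen_Ioi
    exact (continuous_snd.continuousOn).sub
      (hf_cont.comp continuous_fst.continuousOn fun p hp => hp.1)
  have hxs : (x, f x) ∉ s := fun h => lt_irrefl _ h.2
  obtain ⟨L, hL⟩ := geometric_hahn_banach_open_point hconv hopen hxs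
  set c0 : ℝ := L ((0 : Fin n → ℝ), (1 : ℝ)) with hc0_def
  set ellL : (Fin n → ℝ) →ₗ[ℝ] ℝ := L.toLinearMap.comp (LinearMap.inl ℝ (Fin n → ℝ) ℝ)
    with hellL_def
  have hdecomp : ∀ (y : Fin n → ℝ) (t : ℝ), L (y, t) = ellL y + t * c0 := by
    intro y t
    have hyt : (y, t) = (y, (0 : ℝ)) + t • ((0 : Fin n → ℝ), (1 : ℝ)) := by
      simp [Prod.ext_iff]
    rw [hyt, map_add, map_smul]
    simp [hellL_def, hc0_def, smul_eq_mul]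
  have hc0 : c0 < 0 := by
    have hmem : (x, f x + 1) ∈ s := by
      refine ⟨hx, ?_⟩
      show f x < f x + 1
      linarith
    have h1 := hL (x, f x + 1) hmem
    rw [hdecomp, hdecomp] at h1
    linarith
  have hc0' : c0 ≠ 0 := by linarith
  have key : ∀ y ∈ U, ellL y + f y * c0 ≤ ellL x + f x * c0 := by
    intro y hy
    have h2 : ∀ ε : ℝ, 0 < ε → ellL y + f y * c0 < ellL x + f x * c0 + ε := by
      intro ε hε
      have hpos : 0 < ε / (-c0) := div_pos hε (by linarith)
      have hmem : (y, f y + ε / (-c0)) ∈ s := by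
        refine ⟨hy, ?_⟩
        show f y < f y + ε / (-c0)
        linarith
      have h3 := hL (y, f y + ε / (-c0)) hmem
      rw [hdecomp, hdecomp] at h3
      have h4 : ε / (-c0) * c0 = -ε := by
        rw [div_mul_eq_mul_div, mul_div_assoc, div_neg, div_self hc0', mul_neg, mul_one]
      rw [add_mul, h4] at h3
      linarith
    exact le_of_forall_pos_lt_add h2
  set c : ℝ := f x - ellL x / (-c0) with hc_def
  set b : Fin n → ℝ := fun i => ellL (fun j => if i = j then 1 else 0) / (-c0) with hb_def
  have hsum : ∀ y : Fin n → ℝ, c + ∑ i, b i * y i = f x + (ellL y - ellL x) / (-c0) := by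
    intro y
    have hcongr : ∀ i ∈ Finset.univ, b i * y i
        = y i • ellL (fun j => if i = j then 1 else 0) / (-c0) := by
      intro i _
      rw [hb_def, smul_eq_mul]
      ring
    rw [Finset.sum_congr rfl hcongr, hc_def, sub_div,
      LinearMap.pi_apply_eq_sum_univ ellL y, Finset.sum_div]
    ring
  refine ⟨c, b, fun y hy => ?_, ?_⟩
  · rw [hsum y, ← sub_nonneg]
    have hk := key y hy
    have hpos : (0:ℝ) < -c0 := by linarith
    have hid : f y - (f x + (ellL y - ellL x) / (-c0))
        = ((ellL x + f x * c0) - (ellL y + f y * c0)) / (-c0) := by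
      field_simp
      ring
    rw [hid]
    exact div_nonneg (by linarith) hpos.le
  · rw [hsum x]
    simp

set_option maxHeartbeats 1000000

/-- The multivariable Jensen inequality.  The multivariable continuous functional
calculus of mutually commuting selfadjoint elements `a 1, …, a n` (resp. of their
images `φ (a i)`) is encoded by a unital star algebra homomorphism
`Θ : C(K, ℂ) → A` (resp. `Θ' : C(K', ℂ) → B`) sending the `i`-th coordinate function to
`a i` (resp. to `φ (a i)`); such a homomorphism is automatically continuous, positive,
and uniquely determined, and `f(a 1, …, a n) = Θ f`.  If `φ : A → B` is a positive
unital map, `f` is convex (hence continuous) on an open convex set `U ⊆ ℝ^n` containing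
the product of the spectra of the `a i`, and `φ (a 1), …, φ (a n), φ (f(a 1, …, a n))`
mutually commute, then `f(φ (a 1), …, φ (a n)) ≤ φ (f(a 1, …, a n))`. -/
theorem jensen_multivariable {A B : Type*}
    [CStarAlgebra A] [PartialOrder A] [StarOrderedRing A]
    [CStarAlgebra B] [PartialOrder B] [StarOrderedRing B]
    (φ : A →ₗ[ℂ] B) (hφ_pos : ∀ x : A, 0 ≤ x → 0 ≤ φ x) (hφ_unital : φ 1 = 1)
    {n : ℕ} (U : Set (Fin n → ℝ)) (hU_open : IsOpen U) (hU_conv : Convex ℝ U)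
    (f : (Fin n → ℝ) → ℝ) (hf : ConvexOn ℝ U f) (hf_cont : ContinuousOn f U)
    (a : Fin n → A) (ha_sa : ∀ i, IsSelfAdjoint (a i))
    (ha_comm : ∀ i j, Commute (a i) (a j))
    (hspec : ∀ x : Fin n → ℝ, (∀ i, x i ∈ spectrum ℝ (a i)) → x ∈ U)
    (K K' : Set (Fin n → ℝ)) (hK : IsCompact K) (hK' : IsCompact K')
    (hKU : K ⊆ U) (hK'U : K' ⊆ U)
    (Θ : C(K, ℂ) →⋆ₐ[ℂ] A) (Θ' : C(K', ℂ) →⋆ₐ[ℂ] B)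
    (hΘ : ∀ i, Θ ⟨fun x => ((x : Fin n → ℝ) i : ℂ),
      Complex.continuous_ofReal.comp ((continuous_apply i).comp continuous_subtype_val)⟩ = a i)
    (hΘ' : ∀ i, Θ' ⟨fun x => ((x : Fin n → ℝ) i : ℂ),
      Complex.continuous_ofReal.comp ((continuous_apply i).comp continuous_subtype_val)⟩
        = φ (a i))
    (hφa_comm : ∀ i j, Commute (φ (a i)) (φ (a j)))
    (hφfa_comm : ∀ i, Commute (φ (a i))
      (φ (Θ ⟨fun x => (f x : ℂ),
        Complex.continuous_ofReal.comp (hf_cont.mono hKU).restrict⟩))) :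
    Θ' ⟨fun x => (f x : ℂ), Complex.continuous_ofReal.comp (hf_cont.mono hK'U).restrict⟩ ≤
      φ (Θ ⟨fun x => (f x : ℂ), Complex.continuous_ofReal.comp (hf_cont.mono hKU).restrict⟩) := by
  haveI : CompactSpace K := isCompact_iff_compactSpace.mp hK
  haveI : CompactSpace K' := isCompact_iff_compactSpace.mp hK'
  set F : C(K, ℂ) := ⟨fun x => (f x : ℂ),
    Complex.continuous_ofReal.comp (hf_cont.mono hKU).restrict⟩ with hF_def
  set F' : C(K', ℂ) := ⟨fun x => (f x : ℂ),
    Complex.continuous_ofReal.comp (hf_cont.mono hK'U).restrict⟩ with hF'_def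
  set X : Fin n → C(K, ℂ) := fun i => ⟨fun x => ((x : Fin n → ℝ) i : ℂ),
    Complex.continuous_ofReal.comp ((continuous_apply i).comp continuous_subtype_val)⟩
    with hX_def
  set X' : Fin n → C(K', ℂ) := fun i => ⟨fun x => ((x : Fin n → ℝ) i : ℂ),
    Complex.continuous_ofReal.comp ((continuous_apply i).comp continuous_subtype_val)⟩
    with hX'_def
  -- basic facts about φ
  have hφ_star : ∀ x : A, IsSelfAdjoint x → IsSelfAdjoint (φ x) := by
    intro x hx
    have hdecomp : x = x⁺ - x⁻ := (CFC.posPart_sub_negPart x hx).symm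
    rw [hdecomp, map_sub]
    exact ((hφ_pos _ (CFC.posPart_nonneg x)).isSelfAdjoint).sub
      ((hφ_pos _ (CFC.negPart_nonneg x)).isSelfAdjoint)
  have hφ_mono : ∀ x y : A, x ≤ y → φ x ≤ φ y := by
    intro x y h
    have h2 := hφ_pos _ (sub_nonneg.mpr h)
    rw [map_sub] at h2
    exact sub_nonneg.mp h2
  have hFsa : IsSelfAdjoint F := by
    rw [IsSelfAdjoint]
    ext p
    show (starRingEnd ℂ) ((f p : ℝ) : ℂ) = ((f p : ℝ) : ℂ)
    exact Complex.conj_ofReal _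
  have hF'sa : IsSelfAdjoint F' := by
    rw [IsSelfAdjoint]
    ext p
    show (starRingEnd ℂ) ((f p : ℝ) : ℂ) = ((f p : ℝ) : ℂ)
    exact Complex.conj_ofReal _
  have hΘF_sa : IsSelfAdjoint (Θ F) := hFsa.map Θ
  set m : B := φ (Θ F) with hm_def
  have hm_sa : IsSelfAdjoint m := hφ_star _ hΘF_sa
  rw [← sub_nonneg]
  have hd_sa : IsSelfAdjoint (m - Θ' F') := hm_sa.sub (hF'sa.map Θ')
  -- the commutative C⋆-subalgebra
  set S : Set B := insert m (Set.range fun i => φ (a i)) with hS_def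
  have hS_sa : ∀ z ∈ S, IsSelfAdjoint z := by
    intro z hz
    simp only [hS_def, Set.mem_insert_iff, Set.mem_range] at hz
    rcases hz with rfl | ⟨i, rfl⟩
    · exact hm_sa
    · exact hφ_star _ (ha_sa i)
  have hS_comm : ∀ p ∈ S, ∀ q ∈ S, p * q = q * p := by
    intro p hp q hq
    simp only [hS_def, Set.mem_insert_iff, Set.mem_range] at hp hq
    rcases hp with rfl | ⟨i, rfl⟩ <;> rcases hq with rfl | ⟨j, rfl⟩
    · rfl
    · exact (hφfa_comm j).symm.eq
    · exact (hφfa_comm i).eq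
    · exact (hφa_comm i j).eq
  set Csub : StarSubalgebra ℂ B := (StarAlgebra.adjoin ℂ S).topologicalClosure with hC_def
  haveI hCclosed : IsClosed (Csub : Set B) :=
    StarSubalgebra.isClosed_topologicalClosure _
  letI instC : CStarAlgebra Csub := StarSubalgebra.cstarAlgebra Csub
  have hmulcomm : ∀ x y : Csub, x * y = y * x := by
    letI h1 : CommRing (StarAlgebra.adjoin ℂ S) := StarAlgebra.adjoinCommRingOfComm ℂ hS_comm
      (fun p hp q hq => by rw [(hS_sa q hq).star_eq]; exact hS_comm p hp q hq)
    letI h2 : CommRing Csub :=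
      StarSubalgebra.commRingTopologicalClosure _ (fun x y => mul_comm x y)
    exact fun x y => mul_comm x y
  letI : NormedCommRing Csub := { (inferInstance : NormedRing Csub) with mul_comm := hmulcomm }
  have hmem_m : m ∈ Csub := StarSubalgebra.le_topologicalClosure _
    (StarAlgebra.subset_adjoin ℂ S (Set.mem_insert _ _))
  have hmem_b : ∀ i, φ (a i) ∈ Csub := fun i => StarSubalgebra.le_topologicalClosure _
    (StarAlgebra.subset_adjoin ℂ S (Set.mem_insert_of_mem _ ⟨i, rfl⟩))
  -- the range of Θ' is contained in Csub
  have hrange : ∀ g : C(K', ℂ), Θ' g ∈ Csub := by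
    set P : StarSubalgebra ℂ C(K', ℂ) := StarAlgebra.adjoin ℂ (Set.range X') with hP_def
    have hsep : P.SeparatesPoints := by
      intro p q hpq
      have hex : ∃ i, (p : Fin n → ℝ) i ≠ (q : Fin n → ℝ) i := by
        by_contra hcon
        push_neg at hcon
        exact hpq (Subtype.ext (funext hcon))
      obtain ⟨i, hi⟩ := hex
      refine ⟨⇑(X' i), ⟨X' i, StarAlgebra.subset_adjoin ℂ _ ⟨i, rfl⟩, rfl⟩, ?_⟩
      simp only [hX'_def, ContinuousMap.coe_mk]
      exact fun h => hi (Complex.ofReal_inj.mp h)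
    have htop : P.topologicalClosure = ⊤ :=
      ContinuousMap.starSubalgebra_topologicalClosure_eq_top_of_separatesPoints P hsep
    intro g
    have hg : g ∈ closure (P : Set C(K', ℂ)) := by
      have : g ∈ P.topologicalClosure := htop ▸ trivial
      exact this
    have hcont : Continuous Θ' := by
      refine AddMonoidHomClass.continuous_of_bound Θ' 1 fun x => ?_
      simpa using NonUnitalStarAlgHom.norm_apply_le Θ' x
    have himg : Θ' g ∈ closure (Θ' '' (P : Set C(K', ℂ))) :=
      image_closure_subset_closure_image hcont ⟨g, hg, rfl⟩
    have hPC : Θ' '' (P : Set C(K', ℂ)) ⊆ (Csub : Set B) := by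
      have hle : P.map Θ' ≤ Csub := by
        rw [hP_def, StarAlgHom.map_adjoin]
        apply StarAlgebra.adjoin_le
        rintro _ ⟨_, ⟨i, rfl⟩, rfl⟩
        rw [hΘ' i]
        exact hmem_b i
      rintro _ ⟨z, hz, rfl⟩
      exact hle ⟨z, hz, rfl⟩
    exact closure_minimal hPC hCclosed himg
  set ψ : C(K', ℂ) →⋆ₐ[ℂ] Csub := StarAlgHom.codRestrict Θ' Csub hrange with hψ_def
  set mC : Csub := ⟨m, hmem_m⟩ with hmC_def
  -- reduce to the real spectrum of the difference
  rw [StarOrderedRing.nonneg_iff_spectrum_nonneg (R := ℝ) _ hd_sa]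
  intro t ht
  have ht' : (t : ℂ) ∈ spectrum ℂ (m - Θ' F') := by
    rw [← spectrum.preimage_algebraMap ℂ] at ht
    simpa using ht
  have htC : (t : ℂ) ∈ spectrum ℂ (mC - ψ F') :=
    (StarSubalgebra.mem_spectrum_iff Csub).mpr ht'
  obtain ⟨χ, hχ⟩ := WeakDual.CharacterSpace.mem_spectrum_iff_exists.mp htC
  -- the character corresponds to a point of K'
  set κ : C(K', ℂ) →ₐ[ℂ] ℂ := (WeakDual.CharacterSpace.equivAlgHom χ).comp ψ.toAlgHom
    with hκ_def
  set x' : K' := (WeakDual.CharacterSpace.homeoEval K' ℂ).symm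
    (WeakDual.CharacterSpace.equivAlgHom.symm κ) with hx'_def
  have heval : ∀ g : C(K', ℂ), χ (ψ g) = g x' := by
    intro g
    have h1 : WeakDual.CharacterSpace.homeoEval K' ℂ x'
        = WeakDual.CharacterSpace.equivAlgHom.symm κ :=
      (WeakDual.CharacterSpace.homeoEval K' ℂ).apply_symm_apply _
    have h2 : χ (ψ g) = κ g := rfl
    rw [h2, ← WeakDual.CharacterSpace.equivAlgHom_symm_coe κ, ← h1]
    rfl
  -- the affine minorant supporting f at x'
  obtain ⟨c, bb, hg_le, hg_eq⟩ :=
    exists_affine_minorant hU_open hU_conv hf hf_cont (hK'U x'.2)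
  set G : C(K, ℂ) := (c : ℂ) • 1 + ∑ i, (bb i : ℂ) • X i with hG_def
  have hΘG : Θ G = (c : ℂ) • 1 + ∑ i, (bb i : ℂ) • a i := by
    rw [hG_def, map_add, map_smul, map_one, map_sum]
    congr 1
    exact Finset.sum_congr rfl fun i _ => by rw [map_smul, hΘ i]
  have hφΘG : φ (Θ G) = (c : ℂ) • 1 + ∑ i, (bb i : ℂ) • φ (a i) := by
    rw [hΘG, map_add, map_smul, map_sum, hφ_unital]
    congr 1
    exact Finset.sum_congr rfl fun i _ => by rw [map_smul]
  -- positivity : Θ G ≤ Θ F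
  have hr_nonneg : ∀ p : K, 0 ≤ f p - (c + ∑ i, bb i * (p : Fin n → ℝ) i) :=
    fun p => sub_nonneg.mpr (hg_le _ (hKU p.2))
  have hr_cont : Continuous fun p : K =>
      ((Real.sqrt (f p - (c + ∑ i, bb i * (p : Fin n → ℝ) i)) : ℝ) : ℂ) := by
    apply Complex.continuous_ofReal.comp
    apply Real.continuous_sqrt.comp
    exact ((hf_cont.mono hKU).restrict).sub (continuous_const.add
      (continuous_finset_sum _ fun i _ => continuous_const.mul
        ((continuous_apply i).comp continuous_subtype_val)))
  set r : C(K, ℂ) := ⟨_, hr_cont⟩ with hr_def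
  have hFG : F - G = star r * r := by
    ext p
    simp only [hF_def, hG_def, hr_def, hX_def, ContinuousMap.sub_apply,
      ContinuousMap.mul_apply, ContinuousMap.star_apply, ContinuousMap.add_apply,
      ContinuousMap.coe_smul, ContinuousMap.one_apply, ContinuousMap.coe_sum,
      ContinuousMap.coe_mk, Pi.smul_apply, Finset.sum_apply, smul_eq_mul, mul_one]
    rw [Complex.star_def, Complex.conj_ofReal, ← Complex.ofReal_mul,
      Real.mul_self_sqrt (hr_nonneg p)]
    push_cast
    ring
  have hGF : φ (Θ G) ≤ m := by
    have h0 : (0 : A) ≤ Θ F - Θ G := by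
      rw [← map_sub, hFG, map_mul, map_star]
      exact star_mul_self_nonneg _
    exact hφ_mono _ _ (sub_nonneg.mp h0)
  -- φ (Θ G) as the image of an affine function under Θ'
  set G' : C(K', ℂ) := (c : ℂ) • 1 + ∑ i, (bb i : ℂ) • X' i with hG'_def
  have hΘ'G' : Θ' G' = φ (Θ G) := by
    rw [hG'_def, map_add, map_smul, map_one, map_sum, hφΘG]
    congr 1
    exact Finset.sum_congr rfl fun i _ => by rw [map_smul, hΘ' i]
  have hψX : ∀ i, χ (ψ (X' i)) = (((x' : Fin n → ℝ) i : ℝ) : ℂ) := fun i => heval (X' i)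
  have hχG : χ (ψ G') = (c : ℂ) + ∑ i, (bb i : ℂ) * (((x' : Fin n → ℝ) i : ℝ) : ℂ) := by
    rw [heval G', hG'_def]
    simp only [ContinuousMap.add_apply, ContinuousMap.coe_smul, Pi.smul_apply,
      ContinuousMap.one_apply, ContinuousMap.coe_sum, Finset.sum_apply, smul_eq_mul, mul_one,
      hX'_def, ContinuousMap.coe_mk]
  have hnn : 0 ≤ χ mC - χ (ψ G') := by
    rw [← map_sub]
    have hcoe : ((mC - ψ G' : Csub) : B) = m - φ (Θ G) := by
      rw [← hΘ'G']
      rfl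
    have hmem' : χ (mC - ψ G') ∈ spectrum ℂ (m - φ (Θ G)) := by
      rw [← hcoe]
      exact (StarSubalgebra.mem_spectrum_iff Csub).mp
        (WeakDual.CharacterSpace.mem_spectrum_iff_exists.mpr ⟨χ, rfl⟩)
    exact spectrum_nonneg_of_nonneg (sub_nonneg.mpr hGF) hmem'
  have hevalF' : χ (ψ F') = ((f x' : ℝ) : ℂ) := heval F'
  have hfinal : (t : ℂ) = χ mC - ((f x' : ℝ) : ℂ) := by
    rw [← hχ, map_sub, hevalF']
  have hgx : ((c : ℂ) + ∑ i, (bb i : ℂ) * (((x' : Fin n → ℝ) i : ℝ) : ℂ)) = ((f x' : ℝ) : ℂ) := by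
    rw [← hg_eq]
    push_cast
    ring
  have hnt : 0 ≤ (t : ℂ) := by
    rw [hfinal, ← hgx, ← hχG]
    exact hnn
  exact_mod_cast hnt
end

section
/- Let X be a locally compact Hausdorff space with a Borel measure μ, A a unital C*-algebra, and a, b : X → A norm-continuous norm-bounded functions that are densities (∫ a(x)* a(x) dμ = 1 = ∫ b(x)* b(x) dμ) such that a(x) and b(x) are invertible for every x. Then ∫_X a(x)* log(a(x)*^{-1} b(x)* b(x) a(x)^{-1}) a(x) dμ(x) ≤ 0. -/
/-!
Pointwise, the operator inequality `log c ≤ c - 1` for the strictly positive element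
`c = a*⁻¹ b* b a⁻¹`, conjugated by `a`, bounds the integrand by `b* b - a* a`. Integration is
monotone for the C*-order, and the bound integrates to `1 - 1 = 0`.
-/

open MeasureTheory

section CFC

variable {A : Type*} [Ring A] [StarRing A] [TopologicalSpace A] [Algebra ℝ A]
  [PartialOrder A] [StarOrderedRing A] [ContinuousFunctionalCalculus ℝ A IsSelfAdjoint]
  [NonnegSpectrumClass ℝ A]

theorem cfc_log_le_sub_one {c : A} (hc : IsStrictlyPositive c) : cfc Real.log c ≤ c - 1 := by
  have hpos : ∀ t ∈ spectrum ℝ c, 0 < t := fun t ht => hc.spectrum_pos ht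
  calc cfc Real.log c ≤ cfc (fun t : ℝ => t - 1) c :=
        cfc_mono (fun t ht => Real.log_le_sub_one_of_pos (hpos t ht))
          (Real.continuousOn_log.mono fun t ht => (hpos t ht).ne')
    _ = c - 1 := by rw [cfc_sub .., cfc_id' .., cfc_const_one ..]

end CFC

section Conjugation

variable {A : Type*} [Ring A] [StarRing A]

theorem star_mul_ringInverse_conj_sub_one_mul {a : A} (ha : IsUnit a) (b : A) :
    star a * (Ring.inverse (star a) * star b * b * Ring.inverse a - 1) * a
      = star b * b - star a * a := by
  have h₁ : Ring.inverse a * a = 1 := Ring.inverse_mul_cancel _ ha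
  have h₂ : star a * Ring.inverse (star a) = 1 := Ring.mul_inverse_cancel _ ha.star
  calc _ = (star a * Ring.inverse (star a)) * star b * b * (Ring.inverse a * a)
          - star a * a := by noncomm_ring
    _ = _ := by rw [h₁, h₂, one_mul, mul_one]

variable [PartialOrder A] [StarOrderedRing A]

theorem isStrictlyPositive_ringInverse_star_mul_star_mul_mul_ringInverse {a b : A}
    (ha : IsUnit a) (hb : IsUnit b) :
    IsStrictlyPositive (Ring.inverse (star a) * star b * b * Ring.inverse a) := by
  have hd : IsUnit (b * Ring.inverse a) := hb.mul ha.ringInverse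
  have hc : Ring.inverse (star a) * star b * b * Ring.inverse a
      = star (b * Ring.inverse a) * (b * Ring.inverse a) := by
    rw [star_mul, Ring.inverse_star]
    simp only [mul_assoc]
  rw [hc, IsStrictlyPositive.iff_of_unital]
  exact ⟨star_mul_self_nonneg _, hd.star.mul hd⟩

variable [TopologicalSpace A] [Algebra ℝ A] [ContinuousFunctionalCalculus ℝ A IsSelfAdjoint]
  [NonnegSpectrumClass ℝ A]

theorem star_mul_cfc_log_ringInverse_conj_mul_le {a b : A} (ha : IsUnit a) (hb : IsUnit b) :
    star a * cfc Real.log (Ring.inverse (star a) * star b * b * Ring.inverse a) * a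
      ≤ star b * b - star a * a := by
  rw [← star_mul_ringInverse_conj_sub_one_mul ha b]
  exact star_left_conjugate_le_conjugate
    (cfc_log_le_sub_one (isStrictlyPositive_ringInverse_star_mul_star_mul_mul_ringInverse ha hb)) a

end Conjugation

theorem information_inequality_general {X : Type*} [MeasurableSpace X] (μ : Measure X)
    {A : Type*} [CStarAlgebra A] [PartialOrder A] [StarOrderedRing A]
    (a b : X → A)
    (ha_inv : ∀ x, IsUnit (a x)) (hb_inv : ∀ x, IsUnit (b x))
    (ha_int : Integrable (fun x => star (a x) * a x) μ)
    (hb_int : Integrable (fun x => star (b x) * b x) μ)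
    (ha_den : ∫ x, star (a x) * a x ∂μ = 1)
    (hb_den : ∫ x, star (b x) * b x ∂μ = 1)
    (h_int : Integrable (fun x =>
      star (a x) *
        cfc Real.log (Ring.inverse (star (a x)) * star (b x) * b x * Ring.inverse (a x)) *
        a x) μ) :
    ∫ x, star (a x) *
        cfc Real.log (Ring.inverse (star (a x)) * star (b x) * b x * Ring.inverse (a x)) *
        a x ∂μ ≤ 0 :=
  calc _ ≤ ∫ x, (star (b x) * b x - star (a x) * a x) ∂μ :=
        integral_mono h_int (hb_int.sub ha_int) fun x =>
          star_mul_cfc_log_ringInverse_conj_mul_le (ha_inv x) (hb_inv x)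
    _ = 0 := by rw [integral_sub hb_int ha_int, ha_den, hb_den, sub_self]

/-- The noncommutative information inequality: if `a, b : X → A` are norm-continuous,
norm-bounded densities (`∫ a* a dμ = 1 = ∫ b* b dμ`) with invertible values, then
`∫ a(x)* log(a(x)*⁻¹ b(x)* b(x) a(x)⁻¹) a(x) dμ(x) ≤ 0`. -/
theorem information_inequality {X : Type*} [TopologicalSpace X] [LocallyCompactSpace X]
    [T2Space X] [MeasurableSpace X] [BorelSpace X] (μ : Measure X)
    {A : Type*} [CStarAlgebra A] [PartialOrder A] [StarOrderedRing A]
    (a b : X → A) (ha_cont : Continuous a) (hb_cont : Continuous b)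
    (ha_bdd : ∃ C : ℝ, ∀ x, ‖a x‖ ≤ C) (hb_bdd : ∃ C : ℝ, ∀ x, ‖b x‖ ≤ C)
    (ha_inv : ∀ x, IsUnit (a x)) (hb_inv : ∀ x, IsUnit (b x))
    (ha_int : Integrable (fun x => star (a x) * a x) μ)
    (hb_int : Integrable (fun x => star (b x) * b x) μ)
    (ha_den : ∫ x, star (a x) * a x ∂μ = 1)
    (hb_den : ∫ x, star (b x) * b x ∂μ = 1)
    (h_int : Integrable (fun x =>
      star (a x) *
        cfc Real.log (Ring.inverse (star (a x)) * star (b x) * b x * Ring.inverse (a x)) *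
        a x) μ) :
    ∫ x, star (a x) *
        cfc Real.log (Ring.inverse (star (a x)) * star (b x) * b x * Ring.inverse (a x)) *
        a x ∂μ ≤ 0 :=
  information_inequality_general μ a b ha_inv hb_inv ha_int hb_int ha_den hb_den h_int
end
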